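/- arXiv:1211.2927 — 3 statements merged into one kernel-verified Lean document; each statement's English description precedes it below -/
import Mathlib

section
/- The closure of the union D_0(μ) = ⋃_{α ∈ (0,1]} D_α(μ) equals S(μ), the intersection of all closed half-spaces of full μ-measure (i.e., the closed convex hull of the support of μ). -/
/-!
A trimmed mean `α⁻¹ • E[g(X) • X]` is an average of `X` against the weight `g / α`, so it lies in
every closed half-space of full measure; as `S(μ)` is closed, `closure D₀(μ) ⊆ S(μ)`.

Conversely, `D₀(μ)` is convex: mixing two trimming functions `gᵢ` with weights proportional to
`tᵢ / αᵢ` realises the convex combination `t₁ z₁ + t₂ z₂`. A point `y` outside its closure is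
therefore strictly separated from it by some `⟪·, v⟫ = u`. The open half-space `{⟪x, v⟫ < u}` is
`μ`-null, since otherwise the conditional mean of `X` on it would be a point of `D₀(μ)` on the wrong
side of the hyperplane. So `{u ≤ ⟪x, v⟫}` is a half-space of full measure that misses `y`.
-/

open MeasureTheory Set
open scoped InnerProductSpace

noncomputable def trimmedRegion (d : ℕ) (μ : Measure (EuclideanSpace ℝ (Fin d))) (α : ℝ) :
    Set (EuclideanSpace ℝ (Fin d)) :=
  {y | ∃ g : EuclideanSpace ℝ (Fin d) → ℝ, Measurable g ∧ (∀ x, g x ∈ Set.Icc (0:ℝ) 1) ∧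
    (∫ x, g x ∂μ) = α ∧ y = α⁻¹ • ∫ x, g x • x ∂μ}

theorem integrable_of_mem_Icc {Ω : Type*} [MeasurableSpace Ω] {μ : Measure Ω} [IsFiniteMeasure μ]
    {g : Ω → ℝ} (hg : Measurable g) (hg01 : ∀ x, g x ∈ Icc (0 : ℝ) 1) : Integrable g μ :=
  .of_bound hg.aestronglyMeasurable 1 <| ae_of_all _ fun x => by
    rw [Real.norm_of_nonneg (hg01 x).1]; exact (hg01 x).2

section InnerProductSpace

variable {E : Type*} [NormedAddCommGroup E] [InnerProductSpace ℝ E] [MeasurableSpace E]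
  {μ : Measure E} {g : E → ℝ}

theorem integrable_smul_self_of_mem_Icc (hX : Integrable (fun x => x) μ) (hg : Measurable g)
    (hg01 : ∀ x, g x ∈ Icc (0 : ℝ) 1) : Integrable (fun x => g x • x) μ :=
  hX.bdd_smul 1 hg.aestronglyMeasurable <| ae_of_all _ fun x => by
    rw [Real.norm_of_nonneg (hg01 x).1]; exact (hg01 x).2

theorem mul_integral_le_inner_integral_smul [CompleteSpace E] (hg : Integrable g μ)
    (hgX : Integrable (fun x => g x • x) μ) {u : E} {a : ℝ}
    (h : ∀ᵐ x ∂μ, g x * a ≤ g x * ⟪x, u⟫_ℝ) :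
    a * ∫ x, g x ∂μ ≤ ⟪∫ x, g x • x ∂μ, u⟫_ℝ := by
  have hinner : ∀ x, ⟪u, g x • x⟫_ℝ = g x * ⟪x, u⟫_ℝ := fun x => by
    rw [real_inner_smul_right, real_inner_comm]
  calc a * ∫ x, g x ∂μ = ∫ x, g x * a ∂μ := by rw [integral_mul_const, mul_comm]
    _ ≤ ∫ x, g x * ⟪x, u⟫_ℝ ∂μ := by
        refine integral_mono_ae (hg.mul_const a) ?_ h
        simpa only [hinner] using hgX.const_inner (𝕜 := ℝ) u
    _ = ∫ x, ⟪u, g x • x⟫_ℝ ∂μ := by simp only [hinner]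
    _ = ⟪∫ x, g x • x ∂μ, u⟫_ℝ := by rw [integral_inner hgX, real_inner_comm]

end InnerProductSpace

theorem one_le_div_add_div {α₁ α₂ t s : ℝ} (hα₁ : α₁ ∈ Ioc (0 : ℝ) 1) (hα₂ : α₂ ∈ Ioc (0 : ℝ) 1)
    (ht : 0 ≤ t) (hs : 0 ≤ s) (hts : t + s = 1) : 1 ≤ t / α₁ + s / α₂ :=
  hts ▸ add_le_add (le_div_self ht hα₁.1 hα₁.2) (le_div_self hs hα₂.1 hα₂.2)

section TrimmedRegion

variable {d : ℕ} {μ : Measure (EuclideanSpace ℝ (Fin d))}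

theorem le_inner_of_mem_trimmedRegion [IsFiniteMeasure μ] (hX : Integrable (fun x => x) μ)
    {α : ℝ} (hα : 0 < α) {y : EuclideanSpace ℝ (Fin d)} (hy : y ∈ trimmedRegion d μ α)
    {u : EuclideanSpace ℝ (Fin d)} {a : ℝ} (h : ∀ᵐ x ∂μ, a ≤ ⟪x, u⟫_ℝ) : a ≤ ⟪y, u⟫_ℝ := by
  obtain ⟨g, hg, hg01, rfl, rfl⟩ := hy
  have hmean := mul_integral_le_inner_integral_smul (integrable_of_mem_Icc hg hg01)
    (integrable_smul_self_of_mem_Icc hX hg hg01) <|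
    h.mono fun x hx => mul_le_mul_of_nonneg_left hx (hg01 x).1
  rwa [real_inner_smul_left, le_inv_mul_iff₀ hα, mul_comm]

theorem smul_add_smul_mem_trimmedRegion [IsFiniteMeasure μ] (hX : Integrable (fun x => x) μ)
    {α₁ α₂ t s : ℝ} (hα₁ : α₁ ∈ Ioc (0 : ℝ) 1) (hα₂ : α₂ ∈ Ioc (0 : ℝ) 1)
    (ht : 0 ≤ t) (hs : 0 ≤ s) (hts : t + s = 1) {z₁ z₂ : EuclideanSpace ℝ (Fin d)}
    (hz₁ : z₁ ∈ trimmedRegion d μ α₁) (hz₂ : z₂ ∈ trimmedRegion d μ α₂) :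
    t • z₁ + s • z₂ ∈ trimmedRegion d μ (t / α₁ + s / α₂)⁻¹ := by
  obtain ⟨g₁, hg₁, hg₁01, hint₁, rfl⟩ := hz₁
  obtain ⟨g₂, hg₂, hg₂01, hint₂, rfl⟩ := hz₂
  set c₁ := t / α₁
  set c₂ := s / α₂
  set M := c₁ + c₂
  have hM₀ : 0 < M := one_pos.trans_le (one_le_div_add_div hα₁ hα₂ ht hs hts)
  have hc₁ : 0 ≤ c₁ := div_nonneg ht hα₁.1.le
  have hc₂ : 0 ≤ c₂ := div_nonneg hs hα₂.1.le
  have hI₁ := (integrable_of_mem_Icc (μ := μ) hg₁ hg₁01).const_mul c₁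
  have hI₂ := (integrable_of_mem_Icc (μ := μ) hg₂ hg₂01).const_mul c₂
  have hJ₁ := (integrable_smul_self_of_mem_Icc hX hg₁ hg₁01).fun_smul c₁
  have hJ₂ := (integrable_smul_self_of_mem_Icc hX hg₂ hg₂01).fun_smul c₂
  refine ⟨fun x => M⁻¹ * (c₁ * g₁ x + c₂ * g₂ x), by fun_prop, fun x => ⟨?_, ?_⟩, ?_, ?_⟩
  · have := (hg₁01 x).1
    have := (hg₂01 x).1
    positivity
  · rw [inv_mul_le_one₀ hM₀]
    have := mul_le_mul_of_nonneg_left (hg₁01 x).2 hc₁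
    have := mul_le_mul_of_nonneg_left (hg₂01 x).2 hc₂
    linarith
  · rw [integral_const_mul, integral_add hI₁ hI₂, integral_const_mul, integral_const_mul, hint₁,
      hint₂, div_mul_cancel₀ t hα₁.1.ne', div_mul_cancel₀ s hα₂.1.ne', hts, mul_one]
  · have hmix : ∀ x : EuclideanSpace ℝ (Fin d), (M⁻¹ * (c₁ * g₁ x + c₂ * g₂ x)) • x
        = M⁻¹ • (c₁ • (g₁ x • x) + c₂ • (g₂ x • x)) := fun x => by
      simp only [smul_smul, ← add_smul, mul_add]
    simp only [hmix]
    rw [integral_smul, integral_add hJ₁ hJ₂, integral_smul, integral_smul, inv_inv, smul_smul M,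
      mul_inv_cancel₀ hM₀.ne', one_smul]
    simp only [smul_smul, c₁, c₂, div_eq_mul_inv]

theorem convex_iUnion_trimmedRegion [IsFiniteMeasure μ] (hX : Integrable (fun x => x) μ) :
    Convex ℝ (⋃ α ∈ Ioc (0 : ℝ) 1, trimmedRegion d μ α) := by
  intro z₁ hz₁ z₂ hz₂ t s ht hs hts
  obtain ⟨α₁, hα₁, hz₁⟩ := mem_iUnion₂.1 hz₁
  obtain ⟨α₂, hα₂, hz₂⟩ := mem_iUnion₂.1 hz₂
  have hle := one_le_div_add_div hα₁ hα₂ ht hs hts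
  exact mem_iUnion₂.2 ⟨_, ⟨inv_pos.2 (one_pos.trans_le hle), inv_le_one_of_one_le₀ hle⟩,
    smul_add_smul_mem_trimmedRegion hX hα₁ hα₂ ht hs hts hz₁ hz₂⟩

theorem measure_le_inner_eq_one [IsProbabilityMeasure μ] (hX : Integrable (fun x => x) μ)
    {u : ℝ} {v : EuclideanSpace ℝ (Fin d)}
    (h : ∀ z ∈ ⋃ α ∈ Ioc (0 : ℝ) 1, trimmedRegion d μ α, u < ⟪z, v⟫_ℝ) :
    μ {x | u ≤ ⟪x, v⟫_ℝ} = 1 := by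
  set A := {x | ⟪x, v⟫_ℝ < u}
  have hA : MeasurableSet A := measurableSet_lt (by fun_prop) measurable_const
  rw [show {x | u ≤ ⟪x, v⟫_ℝ} = Aᶜ by ext; simp [A], prob_compl_eq_one_iff hA]
  by_contra hA0
  have hα : 0 < μ.real A := ENNReal.toReal_pos hA0 (measure_ne_top μ A)
  set g : EuclideanSpace ℝ (Fin d) → ℝ := A.indicator 1
  have hg : Measurable g := measurable_const.indicator hA
  have hg01 : ∀ x, g x ∈ Icc (0 : ℝ) 1 := fun x => by
    by_cases hx : x ∈ A <;> simp [g, hx]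
  have hmean : (μ.real A)⁻¹ • ∫ x, g x • x ∂μ ∈ trimmedRegion d μ (μ.real A) :=
    ⟨g, hg, hg01, integral_indicator_one hA, rfl⟩
  have hlt := h _ (mem_biUnion ⟨hα, measureReal_le_one⟩ hmean)
  have hle := mul_integral_le_inner_integral_smul (u := -v) (a := -u)
    ((integrable_const 1).indicator hA) (integrable_smul_self_of_mem_Icc hX hg hg01) <|
    ae_of_all _ fun x => by
      by_cases hx : x ∈ A
      · simp only [indicator_of_mem hx, Pi.one_apply, one_mul, inner_neg_right,
          neg_le_neg_iff]
        exact hx.le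
      · simp [hx]
  rw [real_inner_smul_left, lt_inv_mul_iff₀ hα] at hlt
  rw [integral_indicator_one hA, inner_neg_right] at hle
  linarith

end TrimmedRegion

theorem closure_union_trimmed_eq (d : ℕ) (μ : Measure (EuclideanSpace ℝ (Fin d)))
    [IsProbabilityMeasure μ] (hmom : Integrable (fun x => ‖x‖) μ) :
    closure (⋃ α ∈ Set.Ioc (0:ℝ) 1, trimmedRegion d μ α)
      = ⋂₀ {H : Set (EuclideanSpace ℝ (Fin d)) |
          (∃ u a, H = {x | a ≤ (inner ℝ x u : ℝ)}) ∧ μ H = 1} := by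
  have hX : Integrable (fun x => x) μ := (integrable_norm_iff aestronglyMeasurable_id).1 hmom
  apply Subset.antisymm
  · refine closure_minimal ?_ (isClosed_sInter ?_)
    · rintro y hy H ⟨⟨u, a, rfl⟩, hH⟩
      obtain ⟨α, hα, hyα⟩ := mem_iUnion₂.1 hy
      refine le_inner_of_mem_trimmedRegion hX hα.1 hyα <|
        (ae_iff_measure_eq (measurableSet_le (by fun_prop) (by fun_prop)).nullMeasurableSet).2 ?_
      rw [hH, measure_univ]
    · rintro H ⟨⟨u, a, rfl⟩, -⟩
      exact isClosed_le continuous_const (by fun_prop)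
  · intro y hy
    by_contra hy'
    obtain ⟨f, u, hfy, hf⟩ := geometric_hahn_banach_point_closed
      (convex_iUnion_trimmedRegion hX).closure isClosed_closure hy'
    set v := (InnerProductSpace.toDual ℝ _).symm f
    have hv : ∀ x, ⟪x, v⟫_ℝ = f x := fun x => by
      rw [real_inner_comm, InnerProductSpace.toDual_symm_apply]
    have hH := measure_le_inner_eq_one hX (v := v) fun z hz =>
      (hv z).symm ▸ hf z (subset_closure hz)
    have hyH := hy _ ⟨⟨v, u, rfl⟩, hH⟩
    simp only [mem_ofPred_eq, hv] at hyH
    linarith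
end

section
/- Under the continuity assumption μ({x : ⟨x,u⟩ = a}) = 0 for all u ≠ 0 and a ∈ ℝ, the maximizer in the previous optimization is essentially unique: if g: ℝ^d → [0,1] with ∫g dμ = μ(A) (A = {x : ⟨x,u⟩ ≥ a}, u ≠ 0, μ(A) ∈ (0,1)) satisfies ∫ g(x)⟨x,u⟩ dμ(x) = ∫_A ⟨x,u⟩ dμ(x), then g = 1_A μ-almost everywhere. -/
/-! When `0 ≤ g ≤ 1`, the function `(1_A - g) (⟨x, u⟩ - a)` is pointwise nonnegative, and its
integral `(∫_A ⟨x, u⟩ - a μ(A)) - (∫ g ⟨x, u⟩ - a ∫ g)` vanishes under the two constraints on `g`.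
So it vanishes a.e., and off the null hyperplane `⟨x, u⟩ = a` this forces `g = 1_A`. -/

open MeasureTheory Set

lemma indicator_sub_mul_sub_nonneg {α : Type*} {f g : α → ℝ} {a : ℝ}
    (hg01 : ∀ x, g x ∈ Icc (0 : ℝ) 1) (x : α) :
    0 ≤ ({y | a ≤ f y}.indicator (fun _ => (1 : ℝ)) x - g x) * (f x - a) := by
  by_cases hx : a ≤ f x
  · rw [indicator_of_mem (show x ∈ {y | a ≤ f y} from hx)]
    exact mul_nonneg (sub_nonneg.2 (hg01 x).2) (sub_nonneg.2 hx)
  · rw [indicator_of_notMem (show x ∉ {y | a ≤ f y} from hx), zero_sub]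
    exact mul_nonneg_of_nonpos_of_nonpos (neg_nonpos.2 (hg01 x).1) (by linarith)

section

variable {α : Type*} [MeasurableSpace α] {μ : Measure α} [IsFiniteMeasure μ] {f g : α → ℝ}
  {a : ℝ}

lemma integral_indicator_sub_mul_sub {A : Set α} {C : ℝ}
    (hf : Integrable f μ) (hA : MeasurableSet A) (hg : AEStronglyMeasurable g μ)
    (hgC : ∀ᵐ x ∂μ, ‖g x‖ ≤ C) :
    ∫ x, (A.indicator (fun _ => (1 : ℝ)) x - g x) * (f x - a) ∂μ
      = (∫ x in A, f x ∂μ - a * μ.real A) - (∫ x, g x * f x ∂μ - a * ∫ x, g x ∂μ) := by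
  have hfa : Integrable (fun x => f x - a) μ := hf.sub (integrable_const a)
  have hgf : Integrable (fun x => g x * f x) μ := hf.bdd_mul hg hgC
  have hga : Integrable (fun x => a * g x) μ := ((integrable_const C).mono' hg hgC).const_mul a
  calc ∫ x, (A.indicator (fun _ => (1 : ℝ)) x - g x) * (f x - a) ∂μ
      = ∫ x, A.indicator (fun x => f x - a) x - (g x * f x - a * g x) ∂μ := by
        congr 1; funext x; by_cases hx : x ∈ A <;> simp [hx] <;> ring
    _ = ∫ x in A, (f x - a) ∂μ - ∫ x, (g x * f x - a * g x) ∂μ := by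
        have hgfa : Integrable (fun x => g x * f x - a * g x) μ := hgf.sub hga
        rw [integral_sub (hfa.indicator hA) hgfa, integral_indicator hA]
    _ = _ := by
        rw [integral_sub hf.integrableOn (integrable_const a), integral_sub hgf hga,
          integral_const_mul, setIntegral_const, smul_eq_mul]
        ring

lemma ae_eq_indicator_of_integral_indicator_sub_mul_sub_eq_zero
    (hf : Integrable f μ) (hfm : Measurable f) (hg : Measurable g)
    (hg01 : ∀ x, g x ∈ Icc (0 : ℝ) 1) (hlevel : μ {x | f x = a} = 0)
    (h0 : ∫ x, ({y | a ≤ f y}.indicator (fun _ => (1 : ℝ)) x - g x) * (f x - a) ∂μ = 0) :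
    g =ᵐ[μ] {x | a ≤ f x}.indicator (fun _ => (1 : ℝ)) := by
  have hbound : ∀ x, ‖{y | a ≤ f y}.indicator (fun _ => (1 : ℝ)) x - g x‖ ≤ 1 := by
    intro x
    rw [Real.norm_eq_abs, abs_le]
    by_cases hx : x ∈ {y | a ≤ f y} <;> simp only [hx, indicator_of_mem,
      indicator_of_notMem, not_false_eq_true] <;> constructor <;> linarith [(hg01 x).1, (hg01 x).2]
  have hint : Integrable
      (fun x => ({y | a ≤ f y}.indicator (fun _ => (1 : ℝ)) x - g x) * (f x - a)) μ :=
    (hf.sub (integrable_const a)).bdd_mul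
      ((measurable_const.indicator (measurableSet_le measurable_const hfm)).sub
        hg).aestronglyMeasurable (.of_forall hbound)
  have hzero := (integral_eq_zero_iff_of_nonneg (indicator_sub_mul_sub_nonneg hg01) hint).1 h0
  have hoff : ∀ᵐ x ∂μ, f x ≠ a := measure_eq_zero_iff_ae_notMem.1 hlevel
  filter_upwards [hzero, hoff] with x hx hxa
  rcases mul_eq_zero.1 hx with h | h
  · exact (sub_eq_zero.1 h).symm
  · exact absurd (sub_eq_zero.1 h) hxa

end

theorem halfspace_maximizer_unique_general (d : ℕ) (μ : Measure (EuclideanSpace ℝ (Fin d)))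
    [IsProbabilityMeasure μ] (hmom : Integrable (fun x => ‖x‖) μ)
    (hcont : ∀ v : EuclideanSpace ℝ (Fin d), v ≠ 0 → ∀ b : ℝ,
      μ {x | (inner ℝ x v : ℝ) = b} = 0)
    (u : EuclideanSpace ℝ (Fin d)) (hu : u ≠ 0) (a : ℝ)
    (g : EuclideanSpace ℝ (Fin d) → ℝ) (hg : Measurable g)
    (hg01 : ∀ x, g x ∈ Set.Icc (0:ℝ) 1)
    (hgint : (∫ x, g x ∂μ) = (μ {x | a ≤ (inner ℝ x u : ℝ)}).toReal)
    (heq : (∫ x, g x * (inner ℝ x u : ℝ) ∂μ)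
      = ∫ x in {x | a ≤ (inner ℝ x u : ℝ)}, (inner ℝ x u : ℝ) ∂μ) :
    g =ᵐ[μ] Set.indicator {x | a ≤ (inner ℝ x u : ℝ)} (fun _ => (1:ℝ)) := by
  have hf : Integrable (fun x => (inner ℝ x u : ℝ)) μ :=
    ((integrable_norm_iff aestronglyMeasurable_id).1 hmom).inner_const u
  have hfm : Measurable (fun x : EuclideanSpace ℝ (Fin d) => (inner ℝ x u : ℝ)) := by
    fun_prop
  have hg1 : ∀ᵐ x ∂μ, ‖g x‖ ≤ 1 :=
    .of_forall fun x => abs_le.2 ⟨by linarith [(hg01 x).1], (hg01 x).2⟩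
  refine ae_eq_indicator_of_integral_indicator_sub_mul_sub_eq_zero hf hfm hg hg01
    (hcont u hu a) ?_
  rw [integral_indicator_sub_mul_sub hf (measurableSet_le measurable_const hfm)
    hg.aestronglyMeasurable hg1, hgint, heq, measureReal_def, sub_self]

theorem halfspace_maximizer_unique (d : ℕ) (μ : Measure (EuclideanSpace ℝ (Fin d)))
    [IsProbabilityMeasure μ] (hmom : Integrable (fun x => ‖x‖) μ)
    (hcont : ∀ v : EuclideanSpace ℝ (Fin d), v ≠ 0 → ∀ b : ℝ,
      μ {x | (inner ℝ x v : ℝ) = b} = 0)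
    (u : EuclideanSpace ℝ (Fin d)) (hu : u ≠ 0) (a : ℝ)
    (hα : (μ {x | a ≤ (inner ℝ x u : ℝ)}).toReal ∈ Set.Ioo (0:ℝ) 1)
    (g : EuclideanSpace ℝ (Fin d) → ℝ) (hg : Measurable g)
    (hg01 : ∀ x, g x ∈ Set.Icc (0:ℝ) 1)
    (hgint : (∫ x, g x ∂μ) = (μ {x | a ≤ (inner ℝ x u : ℝ)}).toReal)
    (heq : (∫ x, g x * (inner ℝ x u : ℝ) ∂μ)
      = ∫ x in {x | a ≤ (inner ℝ x u : ℝ)}, (inner ℝ x u : ℝ) ∂μ) :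
    g =ᵐ[μ] Set.indicator {x | a ≤ (inner ℝ x u : ℝ)} (fun _ => (1:ℝ)) :=
  halfspace_maximizer_unique_general d μ hmom hcont u hu a g hg hg01 hgint heq
end

section
/- Barycenters of half-spaces with respect to a continuous measure are unique: if μ is a probability measure on ℝ^d with finite first moment such that all affine hyperplanes are μ-null, and H, G are closed half-spaces (or the whole space) with μ(H) > 0, μ(G) > 0 and B_H(μ) = B_G(μ), where B_A(μ) = (1/μ(A))∫_A x dμ(x), then μ(H Δ G) = 0. -/
/-!
A closed half-space `K = {⟪x, v⟫ ≥ b}` with `v ≠ 0` is the unique maximiser, among measurable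
sets `A`, of `∫_A (⟪x, v⟫ - b) dμ`, strictly so once `μ (K ∆ A) > 0` because hyperplanes are
null. If `A` has the same barycenter `m` as `K`, both integrals equal `μ(·) (⟪m, v⟫ - b)`, which
forces `μ A < μ K`. Applied both ways to `H` and `G` this is contradictory unless one of them,
say `H`, is the whole space; then `μ H = 1` rules out `μ H < μ G`, so `G` is the whole space too.
-/

open MeasureTheory Set

/-- `H` is a closed half-space `{x : ⟨x,u⟩ ≥ a}` (the whole space arises with `u = 0`, `a ≤ 0`). -/
def IsHalfSpace {d : ℕ} (H : Set (EuclideanSpace ℝ (Fin d))) : Prop :=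
  ∃ (u : EuclideanSpace ℝ (Fin d)) (a : ℝ), H = {x | a ≤ (inner ℝ x u : ℝ)}

open scoped RealInnerProductSpace

section Bathtub

variable {α : Type*} [MeasurableSpace α] {μ : Measure α} {f : α → ℝ} {A : Set α}

theorem setIntegral_lt_setIntegral_setOf_nonneg (hfm : Measurable f) (hfi : Integrable f μ)
    (hf0 : μ {x | f x = 0} = 0) (hA : MeasurableSet A) (hdiff : μ (symmDiff {x | 0 ≤ f x} A) ≠ 0) :
    ∫ x in A, f x ∂μ < ∫ x in {x | 0 ≤ f x}, f x ∂μ := by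
  set K := {x | 0 ≤ f x}
  have hK : MeasurableSet K := measurableSet_le measurable_const hfm
  set g := K.indicator f - A.indicator f
  have hg_nonneg : 0 ≤ g := fun x => by
    by_cases hxK : x ∈ K <;> by_cases hxA : x ∈ A <;>
      simp_all [g, K, le_of_lt]
  have hgi : Integrable g μ := (hfi.indicator hK).sub (hfi.indicator hA)
  have hsupp : symmDiff K A \ {x | f x = 0} ⊆ Function.support g := by
    rintro x ⟨hx | hx, hfx⟩ <;> simp_all [g, K]
  have hg_pos : 0 < ∫ x, g x ∂μ := by
    rw [integral_pos_iff_support_of_nonneg hg_nonneg hgi]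
    calc 0 < μ (symmDiff K A) := pos_iff_ne_zero.2 hdiff
      _ = μ (symmDiff K A \ {x | f x = 0}) := (measure_sdiff_null hf0).symm
      _ ≤ μ (Function.support g) := measure_mono hsupp
  have hsplit : ∫ x, g x ∂μ = ∫ x in K, f x ∂μ - ∫ x in A, f x ∂μ := by
    rw [← integral_indicator hK, ← integral_indicator hA,
      ← integral_sub (hfi.indicator hK) (hfi.indicator hA)]
    rfl
  linarith

end Bathtub

section InnerProductSpace

variable {E : Type*} [NormedAddCommGroup E] [InnerProductSpace ℝ E] [CompleteSpace E]
  [MeasurableSpace E] {μ : Measure E} [IsFiniteMeasure μ]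

theorem setIntegral_inner_sub_const (hid : Integrable (fun x => x) μ) (A : Set E) (v : E) (b : ℝ) :
    ∫ x in A, (⟪x, v⟫ - b) ∂μ = ⟪∫ x in A, x ∂μ, v⟫ - μ.real A * b := by
  rw [integral_sub (hid.inner_const (𝕜 := ℝ) v).restrict (integrable_const b), setIntegral_const,
    smul_eq_mul, real_inner_comm, ← integral_inner hid.integrableOn]
  simp only [real_inner_comm]

variable [OpensMeasurableSpace E]

theorem measureReal_lt_of_setIntegral_eq_smul (hid : Integrable (fun x => x) μ)
    {v : E} {b : ℝ} (hplane : μ {x | ⟪x, v⟫ = b} = 0)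
    (hKpos : 0 < μ {x | b ≤ ⟪x, v⟫}) {A : Set E} (hA : MeasurableSet A)
    (hdiff : μ (symmDiff {x | b ≤ ⟪x, v⟫} A) ≠ 0) {m : E}
    (hK : ∫ x in {x | b ≤ ⟪x, v⟫}, x ∂μ = μ.real {x | b ≤ ⟪x, v⟫} • m)
    (hAm : ∫ x in A, x ∂μ = μ.real A • m) :
    μ.real A < μ.real {x | b ≤ ⟪x, v⟫} := by
  set K := {x | b ≤ ⟪x, v⟫}
  have hcont : Continuous fun x : E => ⟪x, v⟫ - b := by fun_prop
  have hKeq : {x | 0 ≤ ⟪x, v⟫ - b} = K := by simp only [sub_nonneg, K]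
  have hlt := setIntegral_lt_setIntegral_setOf_nonneg hcont.measurable
    ((hid.inner_const v).sub (integrable_const b)) (by simpa only [sub_eq_zero] using hplane) hA
    (by rwa [hKeq])
  have hK_nonneg : 0 ≤ ∫ x in K, (⟪x, v⟫ - b) ∂μ :=
    setIntegral_nonneg (hKeq ▸ measurableSet_le measurable_const hcont.measurable)
      fun x hx => sub_nonneg.2 hx
  rw [hKeq] at hlt
  simp only [setIntegral_inner_sub_const hid, hK, hAm, real_inner_smul_left] at hlt hK_nonneg
  have hKr : 0 < μ.real K := ENNReal.toReal_pos hKpos.ne' (measure_ne_top μ K)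
  have hc : 0 ≤ ⟪m, v⟫ - b := nonneg_of_mul_nonneg_right (by linarith) hKr
  nlinarith

end InnerProductSpace

section EuclideanSpace

variable {d : ℕ} {μ : Measure (EuclideanSpace ℝ (Fin d))}

theorem IsHalfSpace.measurableSet {H : Set (EuclideanSpace ℝ (Fin d))} (hH : IsHalfSpace H) :
    MeasurableSet H := by
  obtain ⟨u, a, rfl⟩ := hH
  exact measurableSet_le measurable_const (by fun_prop)

theorem IsHalfSpace.eq_univ_or_measureReal_lt [IsFiniteMeasure μ]
    (hid : Integrable (fun x => x) μ)
    (hcont : ∀ v : EuclideanSpace ℝ (Fin d), v ≠ 0 → ∀ b : ℝ, μ {x | ⟪x, v⟫ = b} = 0)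
    {H A : Set (EuclideanSpace ℝ (Fin d))} (hH : IsHalfSpace H) (hHpos : 0 < μ H)
    (hA : MeasurableSet A) (hdiff : μ (symmDiff H A) ≠ 0) {m : EuclideanSpace ℝ (Fin d)}
    (hHm : ∫ x in H, x ∂μ = μ.real H • m) (hAm : ∫ x in A, x ∂μ = μ.real A • m) :
    H = univ ∨ μ.real A < μ.real H := by
  obtain ⟨u, a, rfl⟩ := hH
  by_cases hu : u = 0
  · subst hu
    obtain ⟨x, hx⟩ := nonempty_of_measure_ne_zero hHpos.ne'
    exact Or.inl (eq_univ_of_forall fun y => by simpa using hx)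
  · exact Or.inr (measureReal_lt_of_setIntegral_eq_smul hid (hcont u hu a) hHpos hA hdiff hHm hAm)

end EuclideanSpace

theorem barycenter_halfspace_unique (d : ℕ) (μ : Measure (EuclideanSpace ℝ (Fin d)))
    [IsProbabilityMeasure μ] (hmom : Integrable (fun x => ‖x‖) μ)
    (hcont : ∀ v : EuclideanSpace ℝ (Fin d), v ≠ 0 → ∀ b : ℝ,
      μ {x | (inner ℝ x v : ℝ) = b} = 0)
    (H G : Set (EuclideanSpace ℝ (Fin d))) (hH : IsHalfSpace H) (hG : IsHalfSpace G)
    (hHpos : 0 < μ H) (hGpos : 0 < μ G)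
    (hbar : ((μ H).toReal)⁻¹ • (∫ x in H, x ∂μ) = ((μ G).toReal)⁻¹ • ∫ x in G, x ∂μ) :
    μ (symmDiff H G) = 0 := by
  by_contra hne
  have hid : Integrable (fun x => x) μ := (integrable_norm_iff aestronglyMeasurable_id).1 hmom
  have hHr : μ.real H ≠ 0 := (ENNReal.toReal_pos hHpos.ne' (measure_ne_top μ H)).ne'
  have hGr : μ.real G ≠ 0 := (ENNReal.toReal_pos hGpos.ne' (measure_ne_top μ G)).ne'
  set m := (μ H).toReal⁻¹ • ∫ x in H, x ∂μ
  have hIH : ∫ x in H, x ∂μ = μ.real H • m := (smul_inv_smul₀ hHr _).symm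
  have hIG : ∫ x in G, x ∂μ = μ.real G • m := by
    rw [hbar]
    exact (smul_inv_smul₀ hGr _).symm
  have hne' : μ (symmDiff G H) ≠ 0 := by rwa [symmDiff_comm]
  rcases hH.eq_univ_or_measureReal_lt hid hcont hHpos hG.measurableSet hne hIH hIG
    with rfl | hGH <;>
  rcases hG.eq_univ_or_measureReal_lt hid hcont hGpos hH.measurableSet hne' hIG hIH
    with rfl | hHG
  · simp at hne
  · linarith [measureReal_mono (μ := μ) (subset_univ G)]
  · linarith [measureReal_mono (μ := μ) (subset_univ H)]
  · linarith
end
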